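/- arXiv:1907.08430 — 2 statements merged into one kernel-verified Lean document; each statement's English description precedes it below -/
import Mathlib

section
/- Let G be a d-regular finite simple graph of order n with d ≥ 1, let k be a positive integer and let f be a k-rainbow dominating function on G with weight w(f). With e₂ the number of edges with both endpoints colored, the inequality w(f) ≥ (kn + 2e₂)/(k + d) holds (equivalently, (k + d)·w(f) ≥ k·n + 2e₂). -/
open SimpleGraph Finset

/-- `f` is a `k`-rainbow dominating function on `G`: every vertex with empty color set
has, for each color, a neighbour carrying that color. -/
def IsKRDF {V : Type*} (G : SimpleGraph V) (k : ℕ) (f : V → Finset (Fin k)) : Prop :=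
  ∀ v : V, f v = ∅ → ∀ i : Fin k, ∃ u : V, G.Adj v u ∧ i ∈ f u

/-- The weight of a rainbow coloring function. -/
def rdfWeight {V : Type*} [Fintype V] {k : ℕ} (f : V → Finset (Fin k)) : ℕ :=
  ∑ v : V, (f v).card

/-- The `k`-rainbow domination number of `G`: the minimum weight of a `k`-RDF. -/
noncomputable def rainbowDomNum {V : Type*} [Fintype V] (G : SimpleGraph V) (k : ℕ) : ℕ :=
  sInf {w : ℕ | ∃ f : V → Finset (Fin k), IsKRDF G k f ∧ rdfWeight f = w}

/-- Number of colored vertices (`c`). -/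
noncomputable def coloredCount {V : Type*} {k : ℕ} (f : V → Finset (Fin k)) : ℕ :=
  {v : V | f v ≠ ∅}.ncard

/-- Number of non-colored vertices (`c₀`). -/
noncomputable def uncoloredCount {V : Type*} {k : ℕ} (f : V → Finset (Fin k)) : ℕ :=
  {v : V | f v = ∅}.ncard

/-- Number of edges with both endpoints non-colored (`e₀`). -/
noncomputable def e0Count {V : Type*} (G : SimpleGraph V) {k : ℕ}
    (f : V → Finset (Fin k)) : ℕ :=
  {e ∈ G.edgeSet | ∀ v ∈ e, f v = ∅}.ncard

/-- Number of edges with exactly one colored endpoint (`e₁`). -/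
noncomputable def e1Count {V : Type*} (G : SimpleGraph V) {k : ℕ}
    (f : V → Finset (Fin k)) : ℕ :=
  {e ∈ G.edgeSet | (∃ v ∈ e, f v = ∅) ∧ ∃ v ∈ e, f v ≠ ∅}.ncard

/-- Number of edges with both endpoints colored (`e₂`). -/
noncomputable def e2Count {V : Type*} (G : SimpleGraph V) {k : ℕ}
    (f : V → Finset (Fin k)) : ℕ :=
  {e ∈ G.edgeSet | ∀ v ∈ e, f v ≠ ∅}.ncard

/-! An uncolored vertex sees all `k` colors on its neighbours, so their weights sum to at least
`k`; a colored vertex `u` has `|f u| ≥ 1`. Double counting the pairs (vertex, neighbour) with the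
neighbour's weight, `k · c₀ ≤ ∑ᵤ |f u| · #(uncolored neighbours of u)` and
`2 e₂ = ∑_{u colored} #(colored neighbours of u) ≤ ∑ᵤ |f u| · #(colored neighbours of u)`, so
`k · c₀ + 2 e₂ ≤ ∑ᵤ |f u| · deg u = d · w(f)`. Adding `k · c ≤ k · w(f)` gives the bound. -/

namespace SimpleGraph

variable {V : Type*} (G : SimpleGraph V)

def spanningInduce (p : V → Prop) : SimpleGraph V where
  Adj u v := G.Adj u v ∧ p u ∧ p v
  symm := ⟨fun _ _ h => ⟨h.1.symm, h.2.2, h.2.1⟩⟩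
  loopless := ⟨fun v h => G.loopless.irrefl v h.1⟩

@[simp]
theorem spanningInduce_adj {p : V → Prop} {u v : V} :
    (G.spanningInduce p).Adj u v ↔ G.Adj u v ∧ p u ∧ p v :=
  Iff.rfl

theorem edgeSet_spanningInduce (p : V → Prop) :
    (G.spanningInduce p).edgeSet = {e ∈ G.edgeSet | ∀ v ∈ e, p v} := by
  ext e
  induction e using Sym2.ind with
  | _ a b => simp

variable [Fintype V] [DecidableRel G.Adj]

theorem two_mul_ncard_edges_forall_mem (p : V → Prop) [DecidablePred p] :
    2 * {e ∈ G.edgeSet | ∀ v ∈ e, p v}.ncard = ∑ u with p u, #{v ∈ G.neighborFinset u | p v} := by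
  classical
  rw [← edgeSet_spanningInduce, ← coe_edgeFinset, Set.ncard_coe_finset,
    ← sum_degrees_eq_twice_card_edges, sum_filter]
  refine sum_congr rfl fun u _ => ?_
  rw [← card_neighborFinset_eq_degree]
  split_ifs with hu
  · congr 1
    ext v
    simp [hu]
  · exact card_eq_zero.2 <|
      eq_empty_of_forall_notMem fun v hv => hu ((mem_neighborFinset ..).1 hv).2.1

theorem sum_filter_sum_neighborFinset {M : Type*} [AddCommMonoid M] (p : V → Prop)
    [DecidablePred p] (g : V → M) :
    ∑ v with p v, ∑ u ∈ G.neighborFinset v, g u = ∑ u, #{v ∈ G.neighborFinset u | p v} • g u := by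
  rw [sum_comm' (t' := univ) (s' := fun u => {v ∈ G.neighborFinset u | p v})]
  · simp only [sum_const]
  · intro v u
    simp [adj_comm, and_comm]

end SimpleGraph

section RainbowDomination

variable {V : Type*} [Fintype V] {G : SimpleGraph V} [DecidableRel G.Adj] {k : ℕ}
  {f : V → Finset (Fin k)}

theorem IsKRDF.le_sum_card_neighborFinset (hf : IsKRDF G k f) {v : V} (hv : f v = ∅) :
    k ≤ ∑ u ∈ G.neighborFinset v, #(f u) := by
  have hcover : (univ : Finset (Fin k)) ⊆ (G.neighborFinset v).biUnion f := fun i _ => by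
    obtain ⟨u, hadj, hi⟩ := hf v hv i
    exact mem_biUnion.2 ⟨u, (G.mem_neighborFinset v u).2 hadj, hi⟩
  calc k = #(univ : Finset (Fin k)) := by simp
    _ ≤ #((G.neighborFinset v).biUnion f) := card_le_card hcover
    _ ≤ ∑ u ∈ G.neighborFinset v, #(f u) := card_biUnion_le

theorem IsKRDF.mul_card_uncolored_add_two_mul_e2Count_le (hf : IsKRDF G k f) :
    k * #{v | f v = ∅} + 2 * e2Count G f ≤ ∑ u, #(f u) * G.degree u := by
  have huncolored : k * #{v | f v = ∅} ≤ ∑ u, #{v ∈ G.neighborFinset u | f v = ∅} * #(f u) :=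
    calc k * #{v | f v = ∅} = ∑ v with f v = ∅, k := by rw [sum_const, smul_eq_mul, mul_comm]
      _ ≤ ∑ v with f v = ∅, ∑ u ∈ G.neighborFinset v, #(f u) :=
        sum_le_sum fun v hv => hf.le_sum_card_neighborFinset (mem_filter.1 hv).2
      _ = _ := G.sum_filter_sum_neighborFinset _ _
  have hcolored : 2 * e2Count G f ≤ ∑ u, #{v ∈ G.neighborFinset u | f v ≠ ∅} * #(f u) :=
    calc 2 * e2Count G f = ∑ u with f u ≠ ∅, #{v ∈ G.neighborFinset u | f v ≠ ∅} :=
          G.two_mul_ncard_edges_forall_mem _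
      _ ≤ ∑ u with f u ≠ ∅, #{v ∈ G.neighborFinset u | f v ≠ ∅} * #(f u) :=
        sum_le_sum fun u hu =>
          Nat.le_mul_of_pos_right _ (card_pos.2 (nonempty_iff_ne_empty.2 (mem_filter.1 hu).2))
      _ ≤ _ := sum_le_sum_of_subset (subset_univ _)
  have hdegree (u : V) :
      #{v ∈ G.neighborFinset u | f v = ∅} + #{v ∈ G.neighborFinset u | f v ≠ ∅} = G.degree u := by
    rw [card_filter_add_card_filter_not, card_neighborFinset_eq_degree]
  calc _ ≤ ∑ u, (#{v ∈ G.neighborFinset u | f v = ∅} + #{v ∈ G.neighborFinset u | f v ≠ ∅}) *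
        #(f u) := by
        simp only [add_mul, sum_add_distrib]
        exact add_le_add huncolored hcolored
    _ = _ := sum_congr rfl fun u _ => by rw [hdegree, mul_comm]

theorem card_colored_le_rdfWeight : #{v | f v ≠ ∅} ≤ rdfWeight f :=
  calc #{v | f v ≠ ∅} = ∑ v with f v ≠ ∅, 1 := by simp
    _ ≤ ∑ v with f v ≠ ∅, #(f v) :=
      sum_le_sum fun v hv => card_pos.2 (nonempty_iff_ne_empty.2 (mem_filter.1 hv).2)
    _ ≤ rdfWeight f := sum_le_sum_of_subset (subset_univ _)

end RainbowDomination

theorem stmt_5_general {V : Type*} [Fintype V] (G : SimpleGraph V) [DecidableRel G.Adj]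
    (d k : ℕ) (hreg : G.IsRegularOfDegree d)
    (f : V → Finset (Fin k)) (hf : IsKRDF G k f) :
    k * Fintype.card V + 2 * e2Count G f ≤ (k + d) * rdfWeight f := by
  have hsplit : #{v | f v = ∅} + #{v | f v ≠ ∅} = Fintype.card V :=
    card_filter_add_card_filter_not _
  have hdeg : ∑ u, #(f u) * G.degree u = d * rdfWeight f := by
    rw [rdfWeight, mul_sum]
    exact sum_congr rfl fun u _ => by rw [hreg u, mul_comm]
  have hcolored := Nat.mul_le_mul_left k (card_colored_le_rdfWeight (f := f))
  have hmain := hf.mul_card_uncolored_add_two_mul_e2Count_le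
  rw [← hsplit]
  linarith

/-- For a `d`-regular graph (`d ≥ 1`) of order `n` and a `k`-RDF `f`,
`w(f) ≥ (kn + 2e₂)/(k + d)`, i.e. `(k + d)·w(f) ≥ k·n + 2e₂`. -/
theorem stmt_5 {V : Type*} [Fintype V] (G : SimpleGraph V) [DecidableRel G.Adj]
    (d k : ℕ) (hd : 1 ≤ d) (hreg : G.IsRegularOfDegree d) (hk : 0 < k)
    (f : V → Finset (Fin k)) (hf : IsKRDF G k f) :
    k * Fintype.card V + 2 * e2Count G f ≤ (k + d) * rdfWeight f :=
  stmt_5_general G d k hreg f hf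
end

section
/- For an integer n ≥ 3, the cycle graph C_n satisfies 2·γ_r2(C_n) = n if and only if n ≡ 0 (mod 4); that is, C_n is 2-rainbow domination regular exactly when 4 divides n. -/
open SimpleGraph Finset

/-!
For a 2RDF `f` on `C_n` put `ℓ(v) = |f(v-1)| + 2|f(v)| + |f(v+1)|`. Then `ℓ(v) ≥ 2` everywhere (an
empty vertex sees both colours on its two neighbours) and `∑ ℓ = 4 w(f)`, so `n ≤ 2 w(f)`.
If `2 w(f) = n` then `ℓ ≡ 2`, which forces `f(v+2) = f(v)ᶜ` whenever `f(v)` is a singleton;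
walking once around the cycle in steps of two applies `w(f)` complements and returns to `f(v)`,
so `w(f) = n/2` is even. Conversely, for `4 ∣ n` the pattern `{0}, ∅, {1}, ∅, …` has `ℓ ≡ 2`.
-/

theorem Finset.eq_compl_of_union_eq_univ_of_card_add_card_eq {α : Type*} [Fintype α]
    [DecidableEq α] {s t : Finset α} (hunion : s ∪ t = univ)
    (hcard : #s + #t = Fintype.card α) : t = sᶜ := by
  have hinter : #(s ∩ t) = 0 := by
    have := card_union_add_card_inter s t
    rw [hunion, card_univ] at this
    omega
  refine (IsCompl.compl_eq ⟨?_, ?_⟩).symm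
  · exact disjoint_iff_inter_eq_empty.2 (card_eq_zero.1 hinter)
  · exact codisjoint_iff.2 hunion

section RainbowDomNum

variable {V : Type*} [Fintype V] {G : SimpleGraph V} {k : ℕ}

theorem rainbowDomNum_le {f : V → Finset (Fin k)} (hf : IsKRDF G k f) :
    rainbowDomNum G k ≤ rdfWeight f :=
  Nat.sInf_le ⟨f, hf, rfl⟩

theorem exists_isKRDF_rdfWeight_eq_rainbowDomNum (G : SimpleGraph V) (k : ℕ) :
    ∃ f : V → Finset (Fin k), IsKRDF G k f ∧ rdfWeight f = rainbowDomNum G k := by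
  have hne : {w | ∃ f : V → Finset (Fin k), IsKRDF G k f ∧ rdfWeight f = w}.Nonempty :=
    ⟨_, fun _ => univ, fun _ hv i => absurd (hv ▸ mem_univ i) (notMem_empty i), rfl⟩
  exact Nat.sInf_mem hne

end RainbowDomNum

section Cycle

open Fin.NatCast Fin.CommRing

variable {n : ℕ} [NeZero n]

theorem cycleGraph_adj_iff (hn : 2 ≤ n) {u v : Fin n} :
    (cycleGraph n).Adj v u ↔ u = v - 1 ∨ u = v + 1 := by
  obtain ⟨m, rfl⟩ := Nat.exists_eq_add_of_le' hn
  rw [← mem_neighborSet, cycleGraph_neighborSet]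
  simp

theorem IsKRDF.cycleGraph_union_eq_univ (hn : 2 ≤ n) {k : ℕ} {f : Fin n → Finset (Fin k)}
    (hf : IsKRDF (cycleGraph n) k f) {v : Fin n} (hv : f v = ∅) :
    f (v - 1) ∪ f (v + 1) = univ := by
  refine eq_univ_of_forall fun i => ?_
  obtain ⟨u, hadj, hi⟩ := hf v hv i
  rcases (cycleGraph_adj_iff hn).1 hadj with rfl | rfl <;> simp [hi]

def localWeight {k : ℕ} (f : Fin n → Finset (Fin k)) (v : Fin n) : ℕ :=
  #(f (v - 1)) + 2 * #(f v) + #(f (v + 1))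

theorem sum_localWeight {k : ℕ} (f : Fin n → Finset (Fin k)) :
    ∑ v, localWeight f v = 4 * rdfWeight f := by
  have hsub : ∑ v : Fin n, #(f (v - 1)) = rdfWeight f :=
    Fintype.sum_equiv (Equiv.subRight 1) _ _ fun _ => rfl
  have hadd : ∑ v : Fin n, #(f (v + 1)) = rdfWeight f :=
    Fintype.sum_equiv (Equiv.addRight 1) _ _ fun _ => rfl
  simp only [localWeight, sum_add_distrib, ← mul_sum, hsub, hadd]
  rw [rdfWeight]
  ring

variable {f : Fin n → Finset (Fin 2)}

theorem two_le_localWeight (hn : 2 ≤ n) (hf : IsKRDF (cycleGraph n) 2 f) (v : Fin n) :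
    2 ≤ localWeight f v := by
  unfold localWeight
  by_cases hv : f v = ∅
  · have := card_union_le (f (v - 1)) (f (v + 1))
    rw [hf.cycleGraph_union_eq_univ hn hv, card_univ, Fintype.card_fin] at this
    omega
  · have := card_pos.2 (nonempty_iff_ne_empty.2 hv)
    omega

theorem le_two_mul_rdfWeight (hn : 2 ≤ n) (hf : IsKRDF (cycleGraph n) 2 f) :
    n ≤ 2 * rdfWeight f := by
  have := sum_le_sum fun v (_ : v ∈ univ) => two_le_localWeight hn hf v
  rw [sum_localWeight, sum_const, card_univ, Fintype.card_fin, smul_eq_mul] at this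
  omega

theorem localWeight_eq_two (hn : 2 ≤ n) (hf : IsKRDF (cycleGraph n) 2 f)
    (hw : 2 * rdfWeight f = n) (v : Fin n) : localWeight f v = 2 := by
  have hsum : ∑ _v : Fin n, 2 = ∑ v, localWeight f v := by
    rw [sum_localWeight, sum_const, card_univ, Fintype.card_fin, smul_eq_mul]
    omega
  exact ((sum_eq_sum_iff_of_le fun v _ => two_le_localWeight hn hf v).1 hsum v (mem_univ v)).symm

theorem two_mul_rdfWeight_eq (hf : ∀ v, localWeight f v = 2) : 2 * rdfWeight f = n := by
  have := sum_localWeight f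
  rw [sum_congr rfl fun v _ => hf v, sum_const, card_univ, Fintype.card_fin, smul_eq_mul] at this
  omega

theorem apply_add_two_eq_compl (hn : 2 ≤ n) (hf : IsKRDF (cycleGraph n) 2 f)
    (htight : ∀ v, localWeight f v = 2) {v : Fin n} (hv : #(f v) = 1) :
    f (v + 2) = (f v)ᶜ := by
  have htwo : v + 1 + 1 = v + 2 := by rw [add_assoc, one_add_one_eq_two]
  have hcur := htight v
  have hnext := htight (v + 1)
  unfold localWeight at hcur hnext
  rw [add_sub_cancel_right, htwo] at hnext
  have hempty : f (v + 1) = ∅ := card_eq_zero.1 (by omega)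
  have hunion := hf.cycleGraph_union_eq_univ hn hempty
  rw [add_sub_cancel_right, htwo] at hunion
  refine eq_compl_of_union_eq_univ_of_card_add_card_eq hunion ?_
  rw [Fintype.card_fin]
  omega

theorem apply_add_two_mul_eq_iterate_compl (hn : 2 ≤ n) (hf : IsKRDF (cycleGraph n) 2 f)
    (htight : ∀ v, localWeight f v = 2) (m : ℕ) {v : Fin n} (hv : #(f v) = 1) :
    f (v + 2 * (m : Fin n)) = compl^[m] (f v) := by
  induction m generalizing v with
  | zero => simp
  | succ m ih =>
    have hstep := apply_add_two_eq_compl hn hf htight hv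
    have hcard : #(f (v + 2)) = 1 := by
      rw [hstep, card_compl, Fintype.card_fin, hv]
    rw [Function.iterate_succ_apply, ← hstep, ← ih hcard]
    congr 1
    push_cast
    ring

theorem four_dvd_of_two_mul_rdfWeight_eq (hn : 2 ≤ n) (hf : IsKRDF (cycleGraph n) 2 f)
    (hw : 2 * rdfWeight f = n) : 4 ∣ n := by
  have htight := localWeight_eq_two hn hf hw
  obtain ⟨v, -, hv⟩ : ∃ v ∈ univ, #(f v) ≠ 0 :=
    exists_ne_zero_of_sum_ne_zero (by rw [← rdfWeight]; omega)
  have hv1 : #(f v) = 1 := by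
    have := htight v
    unfold localWeight at this
    omega
  have hturn : 2 * (rdfWeight f : Fin n) = 0 := by
    have : ((2 * rdfWeight f : ℕ) : Fin n) = 0 := by simp [hw]
    exact_mod_cast this
  have hiter := apply_add_two_mul_eq_iterate_compl hn hf htight (rdfWeight f) hv1
  rw [hturn, add_zero] at hiter
  obtain ⟨j, hj⟩ : Even (rdfWeight f) := by
    by_contra hodd
    rw [compl_involutive.iterate_odd (Nat.not_even_iff_odd.1 hodd)] at hiter
    exact ne_compl_self hiter
  exact ⟨j, by omega⟩

end Cycle

section Construction

def rainbowPattern (i : ZMod 4) : Finset (Fin 2) :=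
  if i = 0 then {0} else if i = 2 then {1} else ∅

theorem rainbowPattern_localWeight (i : ZMod 4) :
    #(rainbowPattern (i - 1)) + 2 * #(rainbowPattern i) + #(rainbowPattern (i + 1)) = 2 := by
  revert i; decide

theorem rainbowPattern_union_eq_univ (i : ZMod 4) (hi : rainbowPattern i = ∅) :
    rainbowPattern (i - 1) ∪ rainbowPattern (i + 1) = univ := by
  revert i; decide

variable {m n : ℕ} [NeZero n]

theorem natCast_val_add_one_of_dvd (h : m ∣ n) (v : Fin n) :
    (((v + 1 : Fin n) : ℕ) : ZMod m) = (v : ℕ) + 1 := by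
  have hmod (a : ℕ) : ((a % n : ℕ) : ZMod m) = a :=
    (ZMod.natCast_eq_natCast_iff' _ _ m).2 (Nat.mod_mod_of_dvd a h)
  rw [Fin.val_add, hmod, Nat.cast_add, Fin.val_one', hmod, Nat.cast_one]

theorem natCast_val_sub_one_of_dvd (h : m ∣ n) (v : Fin n) :
    (((v - 1 : Fin n) : ℕ) : ZMod m) = (v : ℕ) - 1 :=
  eq_sub_of_add_eq (by rw [← natCast_val_add_one_of_dvd h, sub_add_cancel])

theorem exists_isKRDF_two_mul_rdfWeight_eq (h4 : 4 ∣ n) :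
    ∃ f : Fin n → Finset (Fin 2), IsKRDF (cycleGraph n) 2 f ∧ 2 * rdfWeight f = n := by
  have hn : 2 ≤ n := le_trans (by norm_num) (Nat.le_of_dvd (Nat.pos_of_neZero n) h4)
  let f (v : Fin n) : Finset (Fin 2) := rainbowPattern (v : ℕ)
  have hf_sub (v : Fin n) : f (v - 1) = rainbowPattern ((v : ℕ) - 1) := by
    simp only [f, natCast_val_sub_one_of_dvd h4]
  have hf_add (v : Fin n) : f (v + 1) = rainbowPattern ((v : ℕ) + 1) := by
    simp only [f, natCast_val_add_one_of_dvd h4]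
  refine ⟨f, fun v hv i => ?_, two_mul_rdfWeight_eq fun v => ?_⟩
  · have hunion := rainbowPattern_union_eq_univ _ hv
    rw [← hf_sub, ← hf_add] at hunion
    rcases mem_union.1 (hunion ▸ mem_univ i) with hi | hi
    · exact ⟨v - 1, (cycleGraph_adj_iff hn).2 (Or.inl rfl), hi⟩
    · exact ⟨v + 1, (cycleGraph_adj_iff hn).2 (Or.inr rfl), hi⟩
  · rw [localWeight, hf_sub, hf_add]
    exact rainbowPattern_localWeight _

end Construction

/-- For `n ≥ 3`, the cycle `C_n` satisfies `2·γ_r2(C_n) = n` (i.e. `C_n` is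
`2`-rainbow domination regular) if and only if `n ≡ 0 (mod 4)`. -/
theorem stmt_14 (n : ℕ) (hn : 3 ≤ n) :
    2 * rainbowDomNum (SimpleGraph.cycleGraph n) 2 = n ↔ n % 4 = 0 := by
  have : NeZero n := ⟨by omega⟩
  obtain ⟨f, hf, hfw⟩ := exists_isKRDF_rdfWeight_eq_rainbowDomNum (cycleGraph n) 2
  rw [← Nat.dvd_iff_mod_eq_zero, ← hfw]
  constructor
  · exact four_dvd_of_two_mul_rdfWeight_eq (by omega) hf
  · intro h4
    obtain ⟨g, hg, hgw⟩ := exists_isKRDF_two_mul_rdfWeight_eq h4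
    have hmin := rainbowDomNum_le hg
    have hlow := le_two_mul_rdfWeight (by omega) hf
    omega
end
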